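/- In any feasible integer solution x of the routing master problem, if the partial path (v_1, ..., v_k) is fully traversed by one selected route r (i.e., x_{v_h, v_{h+1}} = 1 for h < k, with all v_2, ..., v_k customers), and x_{v_k, v_j} = 1 for some earlier customer v_j with j < k, then route r visits customer v_j twice, contradicting elementarity; hence x(Δ^{E,+}_k(P)) = 0 whenever (v_1,...,v_k) is traversed. -/

import Mathlib

/-!
Let `r` be a selected route containing the back arc `(v_k, v_j)`. Each customer lies in exactly
one selected route, so every traversed arc `(v_h, v_{h+1})`, `j ≤ h < k`, starting in `r` is an
arc of `r` itself. Along `r` the positions of `v_j, …, v_k` therefore increase by one per step,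
while the back arc puts `v_j` right after `v_k`: position `v_j` would exceed itself by `k - j + 1`.
-/

variable {V : Type*}

/-- The list of arcs (consecutive node pairs) of a node list. -/
def arcsOf (l : List V) : List (V × V) := l.zip l.tail

/-- The length of a path given as a node list: the sum of its arc distances. -/
def plen (d : V → V → ℝ) (l : List V) : ℝ :=
  ((arcsOf l).map (fun a => d a.1 a.2)).sum

/-- A path is TSP-violating if some path on the same node set with
the same endpoints is strictly shorter. -/
def TSPviolating (d : V → V → ℝ) (P : List V) : Prop :=
  ∃ Q : List V, Q.Perm P ∧ Q.head? = P.head? ∧ Q.getLast? = P.getLast? ∧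
    plen d Q < plen d P

/-- Length of the route visiting customers `c` in order,
starting and ending at the depot. -/
def routeLen (d : V → V → ℝ) (depot : V) (c : List V) : ℝ :=
  plen d (depot :: c ++ [depot])

/-- A route (given by its ordered customer list) is TSP-optimal:
no reordering of its customers gives a strictly shorter route. -/
def TSPopt (d : V → V → ℝ) (depot : V) (c : List V) : Prop :=
  ∀ c' : List V, c'.Perm c → routeLen d depot c ≤ routeLen d depot c'

/-- Arc flow of a set of selected routes: the number of selected routes using arc `a`. -/
def flow [DecidableEq V] (depot : V) (routes : List (List V)) (a : V × V) : ℤ :=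
  (routes.map (fun c => ((arcsOf (depot :: c ++ [depot])).count a : ℤ))).sum

theorem arcsOf_cons_cons (a b : V) (l : List V) :
    arcsOf (a :: b :: l) = (a, b) :: arcsOf (b :: l) := rfl

theorem mem_of_mem_arcsOf {l : List V} {p q : V} (h : (p, q) ∈ arcsOf l) : p ∈ l ∧ q ∈ l :=
  ⟨(List.of_mem_zip h).1, List.mem_of_mem_tail (List.of_mem_zip h).2⟩

theorem mem_arcsOf_of_mem_arcsOf_cons {a p q : V} {l : List V} (h : (p, q) ∈ arcsOf (a :: l))
    (hp : p ≠ a) : (p, q) ∈ arcsOf l := by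
  cases l with
  | nil => simp [arcsOf] at h
  | cons b t =>
    rw [arcsOf_cons_cons, List.mem_cons, Prod.mk.injEq] at h
    exact h.resolve_left fun h' => hp h'.1

theorem mem_arcsOf_of_mem_arcsOf_append_singleton {d p q : V} :
    ∀ {l : List V}, (p, q) ∈ arcsOf (l ++ [d]) → q ≠ d → (p, q) ∈ arcsOf l
  | [], h, _ => by simp [arcsOf] at h
  | [a], h, hq => by simp_all [arcsOf]
  | a :: b :: t, h, hq => by
    rw [List.cons_append, List.cons_append, arcsOf_cons_cons, List.mem_cons] at h
    rw [arcsOf_cons_cons, List.mem_cons]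
    exact h.imp_right fun h' => mem_arcsOf_of_mem_arcsOf_append_singleton h' hq

theorem mem_arcsOf_of_mem_arcsOf_cons_append_singleton {d p q : V} {r : List V}
    (h : (p, q) ∈ arcsOf (d :: r ++ [d])) (hp : p ≠ d) (hq : q ≠ d) : (p, q) ∈ arcsOf r :=
  mem_arcsOf_of_mem_arcsOf_cons (mem_arcsOf_of_mem_arcsOf_append_singleton h hq) hp

theorem idxOf_snd_eq_succ_of_mem_arcsOf [DecidableEq V] {p q : V} :
    ∀ {l : List V}, l.Nodup → (p, q) ∈ arcsOf l → l.idxOf q = l.idxOf p + 1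
  | [], _, h => by simp [arcsOf] at h
  | [a], _, h => by simp [arcsOf] at h
  | a :: b :: t, hnd, h => by
    rw [arcsOf_cons_cons, List.mem_cons, Prod.mk.injEq] at h
    obtain ⟨hanot, hnd'⟩ := List.nodup_cons.mp hnd
    rcases h with ⟨rfl, rfl⟩ | h
    · have hqp : q ≠ p := fun e => hanot (e ▸ List.mem_cons_self)
      simp [List.idxOf_cons_ne _ hqp.symm]
    · have ⟨hp, hq⟩ := mem_of_mem_arcsOf h
      rw [List.idxOf_cons_ne _ (ne_of_mem_of_not_mem hp hanot).symm,
        List.idxOf_cons_ne _ (ne_of_mem_of_not_mem hq hanot).symm,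
        idxOf_snd_eq_succ_of_mem_arcsOf hnd' h]

theorem List.eq_of_sum_map_count_eq_one {α : Type*} [DecidableEq α] {ls : List (List α)}
    {u : α} (hsum : (ls.map (List.count u)).sum = 1) {r r' : List α} (hr : r ∈ ls)
    (hr' : r' ∈ ls) (hu : u ∈ r) (hu' : u ∈ r') : r = r' := by
  by_contra hne
  have hsplit := List.sum_map_erase (List.count u) hr
  -- `List.sum_map_erase` erases with the `DecidableEq` instance, not with `List`'s own `BEq`.
  have hle := List.le_sum_of_mem <| List.mem_map_of_mem (f := List.count u) <|
    (@List.mem_erase_of_ne _ instBEqOfDecidableEq _ _ _ _ (Ne.symm hne)).mpr hr'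
  have h1 := List.count_pos_iff.mpr hu
  have h2 := List.count_pos_iff.mpr hu'
  omega

section Flow

variable [DecidableEq V] {depot : V} {routes : List (List V)}

theorem flow_eq_zero_iff {a : V × V} :
    flow depot routes a = 0 ↔ ∀ r ∈ routes, a ∉ arcsOf (depot :: r ++ [depot]) := by
  have hcast : flow depot routes a =
      ((routes.map fun c => (arcsOf (depot :: c ++ [depot])).count a).sum : ℕ) := by
    rw [flow, Nat.cast_list_sum, List.map_map]
    rfl
  rw [hcast, Nat.cast_eq_zero, List.sum_eq_zero_iff, List.forall_mem_map]
  simp only [List.count_eq_zero]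

theorem mem_arcsOf_of_flow_ne_zero
    (hcover : ∀ u : V, u ≠ depot → (routes.map (fun c => (c.count u : ℤ))).sum = 1)
    {r : List V} (hr : r ∈ routes) {u w : V} (hu : u ∈ r) (hud : u ≠ depot) (hwd : w ≠ depot)
    (hflow : flow depot routes (u, w) ≠ 0) : (u, w) ∈ arcsOf r := by
  obtain ⟨r', hr', harc⟩ : ∃ r' ∈ routes, (u, w) ∈ arcsOf (depot :: r' ++ [depot]) := by
    simpa [flow_eq_zero_iff] using hflow
  have harc' := mem_arcsOf_of_mem_arcsOf_cons_append_singleton harc hud hwd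
  have hsum : (routes.map (List.count u)).sum = 1 := by
    have : (((routes.map (List.count u)).sum : ℕ) : ℤ) = 1 := by
      rw [Nat.cast_list_sum, List.map_map]
      exact hcover u hud
    exact_mod_cast this
  rwa [List.eq_of_sum_map_count_eq_one hsum hr' hr (mem_of_mem_arcsOf harc').1 hu] at harc'

theorem mem_and_idxOf_eq_of_traversed
    (hnd : ∀ c ∈ routes, c.Nodup)
    (hcover : ∀ u : V, u ≠ depot → (routes.map (fun c => (c.count u : ℤ))).sum = 1)
    {v : ℕ → V} {j k : ℕ} (hcust : ∀ i, j ≤ i → i ≤ k → v i ≠ depot)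
    (htrav : ∀ h, j ≤ h → h < k → flow depot routes (v h, v (h + 1)) ≠ 0)
    {r : List V} (hr : r ∈ routes) (hjr : v j ∈ r) :
    ∀ h, j ≤ h → h ≤ k → v h ∈ r ∧ r.idxOf (v h) = r.idxOf (v j) + (h - j) := by
  intro h hjh
  induction h, hjh using Nat.le_induction with
  | base => exact fun _ => ⟨hjr, by simp⟩
  | succ h hjh ih =>
    intro hhk
    obtain ⟨hhr, hidx⟩ := ih (by omega)
    have harc := mem_arcsOf_of_flow_ne_zero hcover hr hhr (hcust h hjh (by omega))
      (hcust (h + 1) (by omega) hhk) (htrav h hjh hhk)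
    refine ⟨(mem_of_mem_arcsOf harc).2, ?_⟩
    rw [idxOf_snd_eq_succ_of_mem_arcsOf (hnd r hr) harc, hidx]
    omega

end Flow

theorem elementarity_lifting_zero_flow_general [DecidableEq V]
    (depot : V) (routes : List (List V))
    (hnd : ∀ c ∈ routes, c.Nodup)
    (hcover : ∀ u : V, u ≠ depot → (routes.map (fun c => (c.count u : ℤ))).sum = 1)
    (k : ℕ) (v : ℕ → V)
    (hcust : ∀ i, 2 ≤ i → i ≤ k → v i ≠ depot)
    (htrav : ∀ h, 1 ≤ h → h ≤ k - 1 → flow depot routes (v h, v (h + 1)) = 1)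
    (j : ℕ) (hj1 : 1 ≤ j) (hjk : j ≤ k - 1) (hjdep : v j ≠ depot) :
    flow depot routes (v k, v j) = 0 := by
  have hcust' : ∀ i, j ≤ i → i ≤ k → v i ≠ depot := fun i hji hik => by
    rcases hji.eq_or_lt with rfl | hlt
    exacts [hjdep, hcust i (by omega) hik]
  rw [flow_eq_zero_iff]
  intro r hr hback
  have hback' := mem_arcsOf_of_mem_arcsOf_cons_append_singleton hback (hcust' k (by omega) le_rfl) hjdep
  have hforward := mem_and_idxOf_eq_of_traversed hnd hcover hcust'
    (fun h hjh hhk => by rw [htrav h (by omega) (by omega)]; exact one_ne_zero) hr (mem_of_mem_arcsOf hback').2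
    k (by omega) le_rfl
  have := idxOf_snd_eq_succ_of_mem_arcsOf (hnd r hr) hback'
  omega

/-- elementarity lifting. In a feasible integer solution, if the partial
path `(v₁,…,v_k)` of pairwise distinct nodes (with `v₂,…,v_k` customers) is fully
traversed, then no arc from `v_k` back to an earlier non-depot node of the path carries
flow: `x(Δ^{E,+}_k(P)) = 0`. -/
theorem elementarity_lifting_zero_flow [DecidableEq V]
    (depot : V) (routes : List (List V))
    (hnd : ∀ c ∈ routes, c.Nodup) (hdep : ∀ c ∈ routes, depot ∉ c)
    (hne : ∀ c ∈ routes, c ≠ [])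
    (hcover : ∀ u : V, u ≠ depot → (routes.map (fun c => (c.count u : ℤ))).sum = 1)
    (k : ℕ) (hk : 2 ≤ k) (v : ℕ → V)
    (hinj : ∀ i j, 1 ≤ i → i ≤ k → 1 ≤ j → j ≤ k → v i = v j → i = j)
    (hcust : ∀ i, 2 ≤ i → i ≤ k → v i ≠ depot)
    (htrav : ∀ h, 1 ≤ h → h ≤ k - 1 → flow depot routes (v h, v (h + 1)) = 1)
    (j : ℕ) (hj1 : 1 ≤ j) (hjk : j ≤ k - 1) (hjdep : v j ≠ depot) :
    flow depot routes (v k, v j) = 0 :=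
  elementarity_lifting_zero_flow_general depot routes hnd hcover k v hcust htrav j hj1 hjk hjdep
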